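/- Let M be a weight module over the Virasoro algebra with weight spaces M_λ, and suppose there exist x ∈ M_{-1}, y ∈ M_1 and τ ∈ k, τ ≠ 0, with e_1 x = 0, e_{-1} y = 0, x = e_{-2} y, e_2 x = τ y. Then the subspace N = U_- x + U_+ y (U_± the subalgebras of U(V) generated by e_{±1}, e_{±2}) is a V-submodule of M all of whose weight spaces are finite-dimensional. -/

import Mathlib

/-!
`N₋ = U₋ x` is spanned by the vectors `e_{i₁} ⋯ e_{iᵣ} x` with all `iⱼ ∈ {-1, -2}`, and
`N₊ = U₊ y` by the `e_{i₁} ⋯ e_{iᵣ} y` with all `iⱼ ∈ {1, 2}`. Such a vector is an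
`e₀`-eigenvector of weight `∓1 + Σ iⱼ`, and only finitely many words have a given weight; this
bounds the weight spaces of `N = N₋ + N₊`.

The elements of `V` stabilising `N` form a Lie subalgebra, and `c, e_{±1}, e_{±2}` generate `V`,
so only these need checking. Moving `e₁` or `e₂` through a word in `e₋₁, e₋₂` by the Leibniz
rule creates only `e₀`, `e₋₁` and `c` in the commutators, plus the boundary terms `e₁ x = 0` and
`e₂ x = τ y`; likewise for `e₋₁, e₋₂` on `N₊`, with `e₋₁ y = 0` and `e₋₂ y = x`.
-/

open LieModule

theorem Module.End.finiteDimensional_span_inf_eigenspace {k M ι : Type*} [Field k]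
    [AddCommGroup M] [Module k M] (f : Module.End k M) (v : ι → M) (w : ι → k)
    (hv : ∀ i, v i ∈ f.eigenspace (w i)) (hw : ∀ μ, (w ⁻¹' {μ}).Finite) (μ : k) :
    FiniteDimensional k ↥(Submodule.span k (Set.range v) ⊓ f.eigenspace μ) := by
  set A := Submodule.span k (v '' (w ⁻¹' {μ}))
  have hA : A ≤ f.eigenspace μ := Submodule.span_le.2 <| by
    rintro _ ⟨i, hi, rfl⟩
    exact (hi : w i = μ) ▸ hv i
  have hspan : Submodule.span k (Set.range v) ≤ A ⊔ ⨆ ν ∈ {ν | ν ≠ μ}, f.eigenspace ν := by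
    refine Submodule.span_le.2 (Set.range_subset_iff.2 fun i => ?_)
    by_cases hi : w i = μ
    · exact Submodule.mem_sup_left (Submodule.subset_span ⟨i, hi, rfl⟩)
    · exact Submodule.mem_sup_right
        (Submodule.mem_iSup_of_mem (w i) (Submodule.mem_iSup_of_mem hi (hv i)))
  have hle : Submodule.span k (Set.range v) ⊓ f.eigenspace μ ≤ A := calc
    _ ≤ (A ⊔ ⨆ ν ∈ {ν | ν ≠ μ}, f.eigenspace ν) ⊓ f.eigenspace μ :=
      inf_le_inf_right _ hspan
    _ = A := by
      rw [sup_inf_assoc_of_le _ hA,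
        (f.eigenspaces_iSupIndep.disjoint_biSup (by simp)).symm.eq_bot, sup_bot_eq]
  have := FiniteDimensional.span_of_finite k ((hw μ).image v)
  exact Submodule.finiteDimensional_of_le hle

theorem List.finite_setOf_sum_map_eq {α : Type*} [Finite α] {a : α → ℤ} (s : ℤ)
    (ha : ∀ i, 0 < s * a i) (n : ℤ) : {l : List α | (l.map a).sum = n}.Finite := by
  have hlen : ∀ l : List α, (l.length : ℤ) ≤ s * (l.map a).sum := by
    intro l
    induction l with
    | nil => simp
    | cons i l ih =>
      simp only [List.length_cons, List.map_cons, List.sum_cons, mul_add]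
      push_cast
      linarith [ha i]
  refine (List.finite_length_le α (s * n).toNat).subset fun l (hl : _ = n) => ?_
  have := hlen l
  rw [hl] at this
  show l.length ≤ _
  omega

theorem List.finite_setOf_add_sum_map_eq {α k : Type*} [Finite α] [Field k] [CharZero k]
    {a : α → ℤ} (s : ℤ) (ha : ∀ i, 0 < s * a i) (ν μ : k) :
    {l : List α | ν + ((l.map a).sum : k) = μ}.Finite := by
  have hsub : {n : ℤ | ν + (n : k) = μ}.Subsingleton := fun n hn m hm =>
    Int.cast_injective (add_left_cancel (hn.trans hm.symm))
  exact hsub.finite.preimage' fun n _ => List.finite_setOf_sum_map_eq s ha n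

section LieStabilizer

variable {k L M : Type*} [CommRing k] [LieRing L] [LieAlgebra k L] [AddCommGroup M] [Module k M]
  [LieRingModule L M] [LieModule k L M]

variable (k) in
def lieStabilizer (N : Submodule k M) : LieSubalgebra k L where
  carrier := {u | N ≤ N.comap (toEnd k L M u)}
  add_mem' {u w} hu hw m hm := by
    show ⁅u + w, m⁆ ∈ N
    rw [add_lie]
    exact add_mem (hu hm) (hw hm)
  zero_mem' m _ := by
    show ⁅(0 : L), m⁆ ∈ N
    rw [zero_lie]
    exact zero_mem N
  smul_mem' t u hu m hm := by
    show ⁅t • u, m⁆ ∈ N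
    rw [smul_lie]
    exact N.smul_mem t (hu hm)
  lie_mem' {u w} hu hw m hm := by
    show ⁅⁅u, w⁆, m⁆ ∈ N
    rw [lie_lie]
    exact sub_mem (hu (hw hm)) (hw (hu hm))

theorem mem_lieStabilizer_of_lie_eq_smul {N : Submodule k M} {u : L} {κ : k}
    (hu : ∀ m : M, ⁅u, m⁆ = κ • m) : u ∈ lieStabilizer k N := fun m hm =>
  show ⁅u, m⁆ ∈ N from hu m ▸ N.smul_mem κ hm

end LieStabilizer

section Words

variable {k L M α : Type*} [LieRing L] [AddCommGroup M] [LieRingModule L M]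

/-- `lieWord e v [i₁, …, iᵣ] = ⁅e i₁, ⁅e i₂, …, ⁅e iᵣ, v⁆…⁆⁆`, the monomial `e i₁ ⋯ e iᵣ` of
`U(L)` applied to `v`. -/
def lieWord (e : α → L) (v : M) (l : List α) : M :=
  l.foldr (fun i m => ⁅e i, m⁆) v

@[simp]
theorem lieWord_nil (e : α → L) (v : M) : lieWord e v [] = v := rfl

@[simp]
theorem lieWord_cons (e : α → L) (v : M) (i : α) (l : List α) :
    lieWord e v (i :: l) = ⁅e i, lieWord e v l⁆ := rfl

variable [CommRing k] [Module k M]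

variable (k) in
def wordSpan (e : α → L) (v : M) : Submodule k M :=
  Submodule.span k (Set.range (lieWord e v))

variable {e : α → L} {v : M}

theorem mem_wordSpan_self : v ∈ wordSpan k e v :=
  Submodule.subset_span ⟨[], rfl⟩

variable [LieAlgebra k L] [LieModule k L M]

theorem wordSpan_le_comap_letter (i : α) :
    wordSpan k e v ≤ (wordSpan k e v).comap (toEnd k L M (e i)) :=
  Submodule.span_le.2 <| Set.range_subset_iff.2 fun l => Submodule.subset_span ⟨i :: l, rfl⟩

theorem wordSpan_le_comap_of_lie {u : L} {Q : Submodule k M}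
    (hQ : ∀ i, Q ≤ Q.comap (toEnd k L M (e i))) (hv : ⁅u, v⁆ ∈ Q)
    (hu : ∀ i, wordSpan k e v ≤ Q.comap (toEnd k L M ⁅u, e i⁆)) :
    wordSpan k e v ≤ Q.comap (toEnd k L M u) := by
  refine Submodule.span_le.2 (Set.range_subset_iff.2 fun l => ?_)
  induction l with
  | nil => exact hv
  | cons i l ih =>
    show ⁅u, ⁅e i, lieWord e v l⁆⁆ ∈ Q
    rw [leibniz_lie]
    exact add_mem (hu i (Submodule.subset_span ⟨l, rfl⟩)) (hQ i ih)

theorem span_image_adjoin_eq_wordSpan (e : α → L) (v : M) :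
    Submodule.span k ((fun a => UniversalEnvelopingAlgebra.lift k (toEnd k L M) a v) ''
      Algebra.adjoin k (Set.range (UniversalEnvelopingAlgebra.ι k ∘ e))) = wordSpan k e v := by
  set ρ := UniversalEnvelopingAlgebra.lift k (toEnd k L M)
  have hρ (u : L) (m : M) : ρ (UniversalEnvelopingAlgebra.ι k u) m = ⁅u, m⁆ := by
    simp [ρ]
  apply le_antisymm
  · refine Submodule.span_le.2 ?_
    rintro _ ⟨a, ha, rfl⟩
    suffices ∀ m ∈ wordSpan k e v, ρ a m ∈ wordSpan k e v from this v mem_wordSpan_self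
    induction ha using Algebra.adjoin_induction with
    | mem b hb =>
      obtain ⟨i, rfl⟩ := hb
      intro m hm
      rw [Function.comp_apply, hρ]
      exact wordSpan_le_comap_letter i hm
    | algebraMap r =>
      intro m hm
      rw [AlgHom.commutes, Module.algebraMap_end_apply]
      exact Submodule.smul_mem _ r hm
    | add a b _ _ iha ihb =>
      intro m hm
      rw [map_add, LinearMap.add_apply]
      exact add_mem (iha m hm) (ihb m hm)
    | mul a b _ _ iha ihb =>
      intro m hm
      rw [map_mul, Module.End.mul_apply]
      exact iha _ (ihb m hm)
  · refine Submodule.span_le.2 (Set.range_subset_iff.2 fun l => Submodule.subset_span ?_)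
    induction l with
    | nil => exact ⟨1, one_mem _, by simp⟩
    | cons i l ih =>
      obtain ⟨a, ha, hav⟩ := ih
      refine ⟨UniversalEnvelopingAlgebra.ι k (e i) * a,
        mul_mem (Algebra.subset_adjoin ⟨i, rfl⟩) ha, ?_⟩
      simp only [map_mul, Module.End.mul_apply] at hav ⊢
      rw [hav, hρ, lieWord_cons]

end Words

def VirasoroRelations (k : Type*) {L : Type*} [Field k] [LieRing L] [LieAlgebra k L]
    (E : ℤ → L) (C : L) : Prop :=
  ∀ i j : ℤ, ⁅E i, E j⁆ =
    (j - i) • E (i + j) + (if i + j = 0 then ((i : k) ^ 3 - (i : k)) / 12 else 0) • C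

namespace VirasoroRelations

variable {k L : Type*} [Field k] [LieRing L] [LieAlgebra k L] {E : ℤ → L} {C : L}

theorem lie_E_zero (hE : VirasoroRelations k E C) (j : ℤ) : ⁅E 0, E j⁆ = j • E j := by
  simp [hE 0 j]

section Subalgebra

variable [CharZero k] {H : LieSubalgebra k L}

theorem E_add_mem (hE : VirasoroRelations k E C) (hC : C ∈ H) {i j : ℤ} (hi : E i ∈ H)
    (hj : E j ∈ H) (hij : i ≠ j) : E (i + j) ∈ H := by
  have hne : ((j - i : ℤ) : k) ≠ 0 := Int.cast_ne_zero.2 (sub_ne_zero.2 hij.symm)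
  have h : ((j - i : ℤ) : k) • E (i + j) ∈ H := by
    have := H.lie_mem hi hj
    rw [hE, ← Int.cast_smul_eq_zsmul k] at this
    exact (add_mem_cancel_right (H.smul_mem _ hC)).1 this
  simpa only [inv_smul_smul₀ hne] using H.smul_mem ((j - i : ℤ) : k)⁻¹ h

theorem E_mul_succ_mem (hE : VirasoroRelations k E C) (hC : C ∈ H) {σ : ℤ} (hσ : σ ≠ 0)
    (h₁ : E σ ∈ H) (h₂ : E (2 * σ) ∈ H) : ∀ n : ℕ, E (σ * (n + 1)) ∈ H
  | 0 => by simpa using h₁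
  | 1 => by simpa [mul_comm] using h₂
  | n + 2 => by
    have hne : σ ≠ σ * ((n + 1 : ℕ) + 1) := by
      intro h
      have : σ * ((n : ℤ) + 1) = 0 := by push_cast at h; linarith
      simp [hσ] at this
      omega
    convert hE.E_add_mem hC h₁ (hE.E_mul_succ_mem hC hσ h₁ h₂ (n + 1)) hne using 2
    push_cast
    ring

theorem lieSubalgebra_eq_top (hE : VirasoroRelations k E C)
    (hspan : Submodule.span k ({C} ∪ Set.range E) = ⊤) (hC : C ∈ H) (hp₁ : E 1 ∈ H)
    (hp₂ : E 2 ∈ H) (hn₁ : E (-1) ∈ H) (hn₂ : E (-2) ∈ H) : H = ⊤ := by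
  have hEH (n : ℤ) : E n ∈ H := by
    rcases lt_trichotomy n 0 with hn | rfl | hn
    · have := hE.E_mul_succ_mem hC (σ := -1) (by norm_num) hn₁ hn₂ (-n - 1).toNat
      rwa [show -1 * (((-n - 1).toNat : ℕ) + 1 : ℤ) = n by omega] at this
    · simpa using hE.E_add_mem hC hn₁ hp₁ (by norm_num)
    · have := hE.E_mul_succ_mem hC one_ne_zero (by simpa using hp₁) hp₂ (n - 1).toNat
      rwa [show 1 * (((n - 1).toNat : ℕ) + 1 : ℤ) = n by omega] at this
  rw [← LieSubalgebra.toSubmodule_eq_top, eq_top_iff, ← hspan, Submodule.span_le]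
  exact Set.union_subset (Set.singleton_subset_iff.2 hC) (Set.range_subset_iff.2 hEH)

end Subalgebra

section Module

variable {M : Type*} [AddCommGroup M] [Module k M] [LieRingModule L M] [LieModule k L M]

theorem le_comap_lie_E_E (hE : VirasoroRelations k E C) {κ : k}
    (hc : ∀ m : M, ⁅C, m⁆ = κ • m) {P Q : Submodule k M} (hPQ : P ≤ Q) {i j n : ℤ}
    (hn : i + j = n)
    (h : P ≤ Q.comap (toEnd k L M (E n))) : P ≤ Q.comap (toEnd k L M ⁅E i, E j⁆) := by
  intro m hm
  subst hn
  show ⁅⁅E i, E j⁆, m⁆ ∈ Q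
  rw [hE, add_lie, ← Int.cast_smul_eq_zsmul k, smul_lie, smul_lie, hc]
  exact add_mem (Q.smul_mem _ (h hm)) (Q.smul_mem _ (Q.smul_mem _ (hPQ hm)))

theorem lie_E_zero_lieWord {α : Type*} (hE : VirasoroRelations k E C) (a : α → ℤ) {v : M}
    {ν : k} (hv : ⁅E 0, v⁆ = ν • v) (l : List α) :
    ⁅E 0, lieWord (E ∘ a) v l⁆ = (ν + ((l.map a).sum : k)) • lieWord (E ∘ a) v l := by
  induction l with
  | nil => simpa using hv
  | cons i l ih =>
    rw [lieWord_cons, leibniz_lie, Function.comp_apply, hE.lie_E_zero, ih, lie_smul,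
      ← Int.cast_smul_eq_zsmul k, smul_lie, ← add_smul]
    congr 1
    simp only [List.map_cons, List.sum_cons]
    push_cast
    ring

theorem wordSpan_le_comap_E_zero {α : Type*} (hE : VirasoroRelations k E C) (a : α → ℤ)
    {v : M} {ν : k} (hv : ⁅E 0, v⁆ = ν • v) :
    wordSpan k (E ∘ a) v ≤ (wordSpan k (E ∘ a) v).comap (toEnd k L M (E 0)) :=
  Submodule.span_le.2 <| Set.range_subset_iff.2 fun l => by
    show ⁅E 0, lieWord (E ∘ a) v l⁆ ∈ wordSpan k (E ∘ a) v
    rw [hE.lie_E_zero_lieWord a hv]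
    exact Submodule.smul_mem _ _ (Submodule.subset_span ⟨l, rfl⟩)

theorem finiteDimensional_wordSpan_sup_inf_eigenspace [CharZero k] {α β : Type*} [Finite α]
    [Finite β] (hE : VirasoroRelations k E C) {a : α → ℤ} {b : β → ℤ} (s t : ℤ)
    (ha : ∀ i, 0 < s * a i) (hb : ∀ i, 0 < t * b i) {v w : M} {ν ν' : k}
    (hv : ⁅E 0, v⁆ = ν • v) (hw : ⁅E 0, w⁆ = ν' • w) (μ : k) :
    FiniteDimensional k ↥((wordSpan k (E ∘ a) v ⊔ wordSpan k (E ∘ b) w) ⊓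
      (toEnd k L M (E 0)).eigenspace μ) := by
  rw [wordSpan, wordSpan, ← Submodule.span_union, ← Set.Sum.elim_range]
  refine Module.End.finiteDimensional_span_inf_eigenspace _ _
    (Sum.elim (fun l => ν + ((l.map a).sum : k)) fun l => ν' + ((l.map b).sum : k)) ?_ ?_ μ
  · rintro (l | l) <;> rw [Module.End.mem_eigenspace_iff, toEnd_apply_apply]
    exacts [hE.lie_E_zero_lieWord a hv l, hE.lie_E_zero_lieWord b hw l]
  · exact fun μ => Set.finite_preimage_inl_and_inr.1
      ⟨List.finite_setOf_add_sum_map_eq s ha ν μ, List.finite_setOf_add_sum_map_eq t hb ν' μ⟩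

theorem wordSpan_le_comap_of_boundary (hE : VirasoroRelations k E C) {κ : k}
    (hc : ∀ m : M, ⁅C, m⁆ = κ • m) {a b : ℤ} (hb : b = 2 * a) {v w : M} {ν : k}
    (hv : ⁅E 0, v⁆ = ν • v) (hv₁ : ⁅E (-a), v⁆ = 0) (hv₂ : ⁅E (-b), v⁆ ∈ Submodule.span k {w})
    (hw₁ : ⁅E a, w⁆ = 0) (hw₂ : ⁅E b, w⁆ ∈ wordSpan k (E ∘ ![a, b]) v) {N : Submodule k M}
    (hPN : wordSpan k (E ∘ ![a, b]) v ≤ N) (hwN : w ∈ N) :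
    ∀ j ∈ ({a, b, -a, -b} : Set ℤ), wordSpan k (E ∘ ![a, b]) v ≤ N.comap (toEnd k L M (E j)) := by
  set P := wordSpan k (E ∘ ![a, b]) v
  set Q := P ⊔ Submodule.span k {w}
  have hPQ : P ≤ Q := le_sup_left
  have hQN : Q.comap (toEnd k L M (E (-b))) ≤ N.comap (toEnd k L M (E (-b))) :=
    Submodule.comap_mono (sup_le hPN ((Submodule.span_singleton_le_iff_mem _ _).2 hwN))
  have hPa : P ≤ P.comap (toEnd k L M (E a)) := wordSpan_le_comap_letter 0
  have hPb : P ≤ P.comap (toEnd k L M (E b)) := wordSpan_le_comap_letter 1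
  have hP₀ : P ≤ P.comap (toEnd k L M (E 0)) := hE.wordSpan_le_comap_E_zero _ hv
  have hPa' : P ≤ P.comap (toEnd k L M (E (-a))) := by
    refine wordSpan_le_comap_of_lie wordSpan_le_comap_letter (by rw [hv₁]; exact zero_mem P)
      (Fin.forall_fin_two.2 ?_)
    simp only [Function.comp_apply, Matrix.cons_val_zero, Matrix.cons_val_one]
    exact ⟨hE.le_comap_lie_E_E hc le_rfl (by omega) hP₀,
      hE.le_comap_lie_E_E hc le_rfl (by omega) hPa⟩
  have hQ : ∀ i, Q ≤ Q.comap (toEnd k L M ((E ∘ ![a, b]) i)) := by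
    refine Fin.forall_fin_two.2 ?_
    simp only [Function.comp_apply, Matrix.cons_val_zero, Matrix.cons_val_one]
    exact ⟨sup_le (hPa.trans (Submodule.comap_mono hPQ))
        ((Submodule.span_singleton_le_iff_mem _ _).2 (show ⁅E a, w⁆ ∈ Q from hw₁ ▸ zero_mem Q)),
      sup_le (hPb.trans (Submodule.comap_mono hPQ))
        ((Submodule.span_singleton_le_iff_mem _ _).2 (hPQ hw₂))⟩
  have hPb' : P ≤ Q.comap (toEnd k L M (E (-b))) := by
    refine wordSpan_le_comap_of_lie hQ (Submodule.mem_sup_right hv₂) (Fin.forall_fin_two.2 ?_)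
    simp only [Function.comp_apply, Matrix.cons_val_zero, Matrix.cons_val_one]
    exact ⟨hE.le_comap_lie_E_E hc hPQ (by omega) (hPa'.trans (Submodule.comap_mono hPQ)),
      hE.le_comap_lie_E_E hc hPQ (by omega) (hP₀.trans (Submodule.comap_mono hPQ))⟩
  simp only [Set.mem_insert_iff, Set.mem_singleton_iff, forall_eq_or_imp, forall_eq]
  exact ⟨hPa.trans (Submodule.comap_mono hPN), hPb.trans (Submodule.comap_mono hPN),
    hPa'.trans (Submodule.comap_mono hPN), hPb'.trans hQN⟩

end Module

end VirasoroRelations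

theorem virasoro_N_is_submodule_with_finite_weights_general
    {k : Type*} [Field k] [CharZero k]
    {L : Type*} [LieRing L] [LieAlgebra k L]
    (E : ℤ → L) (C : L)
    (hE : ∀ i j : ℤ, ⁅E i, E j⁆ =
      (j - i) • E (i + j) + (if i + j = 0 then ((i : k) ^ 3 - (i : k)) / 12 else 0) • C)
    (hspan : Submodule.span k ({C} ∪ Set.range E) = ⊤)
    {M : Type*} [AddCommGroup M] [Module k M] [LieRingModule L M] [LieModule k L M]
    (κ : k) (hc : ∀ m : M, ⁅C, m⁆ = κ • m)
    (x y : M) (τ : k)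
    (hx : ⁅E 0, x⁆ = (-1 : k) • x) (hy : ⁅E 0, y⁆ = (1 : k) • y)
    (h1x : ⁅E 1, x⁆ = 0) (hm1y : ⁅E (-1), y⁆ = 0)
    (hxy : x = ⁅E (-2), y⁆) (h2x : ⁅E 2, x⁆ = τ • y) :
    letI ρ : UniversalEnvelopingAlgebra k L →ₐ[k] Module.End k M :=
      UniversalEnvelopingAlgebra.lift k (LieModule.toEnd k L M)
    letI Uminus : Subalgebra k (UniversalEnvelopingAlgebra k L) :=
      Algebra.adjoin k {UniversalEnvelopingAlgebra.ι k (E (-1)),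
        UniversalEnvelopingAlgebra.ι k (E (-2))}
    letI Uplus : Subalgebra k (UniversalEnvelopingAlgebra k L) :=
      Algebra.adjoin k {UniversalEnvelopingAlgebra.ι k (E 1),
        UniversalEnvelopingAlgebra.ι k (E 2)}
    letI N : Submodule k M := Submodule.span k
      ((fun a => ρ a x) '' (Uminus : Set (UniversalEnvelopingAlgebra k L)) ∪
       (fun a => ρ a y) '' (Uplus : Set (UniversalEnvelopingAlgebra k L)))
    (∀ u : L, ∀ m ∈ N, ⁅u, m⁆ ∈ N) ∧
    (∀ μ : k, FiniteDimensional k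
      ↥(N ⊓ Module.End.eigenspace (LieModule.toEnd k L M (E 0)) μ)) := by
  have hE : VirasoroRelations k E C := hE
  have hpair (a b : ℤ) :
      {UniversalEnvelopingAlgebra.ι k (E a), UniversalEnvelopingAlgebra.ι k (E b)} =
        Set.range (UniversalEnvelopingAlgebra.ι k ∘ E ∘ ![a, b]) := by
    rw [Set.range_comp, Set.range_comp, Matrix.range_cons_cons_empty, Set.image_pair,
      Set.image_pair]
  set Pm := wordSpan k (E ∘ ![-1, -2]) x
  set Pp := wordSpan k (E ∘ ![1, 2]) y
  rw [Submodule.span_union, hpair, hpair, span_image_adjoin_eq_wordSpan,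
    span_image_adjoin_eq_wordSpan]
  have hm := hE.wordSpan_le_comap_of_boundary hc (a := -1) (b := -2) (N := Pm ⊔ Pp)
    (by norm_num) hx (by rwa [neg_neg])
    (by rw [neg_neg, h2x]; exact Submodule.smul_mem _ τ (Submodule.mem_span_singleton_self y))
    hm1y (hxy ▸ mem_wordSpan_self) le_sup_left (Submodule.mem_sup_right mem_wordSpan_self)
  have hp := hE.wordSpan_le_comap_of_boundary hc (a := 1) (b := 2) (N := Pm ⊔ Pp)
    (by norm_num) hy hm1y
    (hxy ▸ Submodule.mem_span_singleton_self x) h1x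
    (h2x ▸ Submodule.smul_mem _ τ mem_wordSpan_self) le_sup_right
    (Submodule.mem_sup_left mem_wordSpan_self)
  have hstab (j : ℤ) (hj : j ∈ ({1, 2, -1, -2} : Set ℤ)) : E j ∈ lieStabilizer k (Pm ⊔ Pp) := by
    simp only [Set.mem_insert_iff, Set.mem_singleton_iff] at hj
    exact sup_le (hm j (by simp; omega)) (hp j (by simp; omega))
  have htop : lieStabilizer k (Pm ⊔ Pp) = ⊤ := hE.lieSubalgebra_eq_top hspan
    (mem_lieStabilizer_of_lie_eq_smul hc) (hstab 1 (by simp)) (hstab 2 (by simp))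
    (hstab (-1) (by simp)) (hstab (-2) (by simp))
  exact ⟨fun u _ hm => (htop ▸ LieSubalgebra.mem_top u : u ∈ lieStabilizer k (Pm ⊔ Pp)) hm,
    hE.finiteDimensional_wordSpan_sup_inf_eigenspace (-1) 1 (by decide) (by decide) hx hy⟩

/-- Let `M` be a weight module over the Virasoro algebra (with `c` acting by a
scalar), and suppose `x ∈ M₋₁`, `y ∈ M₁` and `τ ≠ 0` satisfy `e₁ x = 0`,
`e₋₁ y = 0`, `x = e₋₂ y`, `e₂ x = τ y`.  Then the subspace `N = U₋ x + U₊ y`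
(where `U₊`, `U₋` are the subalgebras of `U(V)` generated by `e₁, e₂` and
`e₋₁, e₋₂`) is a `V`-submodule of `M` all of whose weight spaces are
finite-dimensional. -/
theorem virasoro_N_is_submodule_with_finite_weights
    {k : Type*} [Field k] [CharZero k]
    {L : Type*} [LieRing L] [LieAlgebra k L]
    (E : ℤ → L) (C : L)
    (hC : ∀ z : L, ⁅C, z⁆ = 0)
    (hE : ∀ i j : ℤ, ⁅E i, E j⁆ =
      (j - i) • E (i + j) + (if i + j = 0 then ((i : k) ^ 3 - (i : k)) / 12 else 0) • C)
    (hspan : Submodule.span k ({C} ∪ Set.range E) = ⊤)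
    {M : Type*} [AddCommGroup M] [Module k M] [LieRingModule L M] [LieModule k L M]
    (hweight : (⨆ μ : k, Module.End.eigenspace (LieModule.toEnd k L M (E 0)) μ) = ⊤)
    (κ : k) (hc : ∀ m : M, ⁅C, m⁆ = κ • m)
    (x y : M) (τ : k) (hτ : τ ≠ 0)
    (hx : ⁅E 0, x⁆ = (-1 : k) • x) (hy : ⁅E 0, y⁆ = (1 : k) • y)
    (h1x : ⁅E 1, x⁆ = 0) (hm1y : ⁅E (-1), y⁆ = 0)
    (hxy : x = ⁅E (-2), y⁆) (h2x : ⁅E 2, x⁆ = τ • y) :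
    letI ρ : UniversalEnvelopingAlgebra k L →ₐ[k] Module.End k M :=
      UniversalEnvelopingAlgebra.lift k (LieModule.toEnd k L M)
    letI Uminus : Subalgebra k (UniversalEnvelopingAlgebra k L) :=
      Algebra.adjoin k {UniversalEnvelopingAlgebra.ι k (E (-1)),
        UniversalEnvelopingAlgebra.ι k (E (-2))}
    letI Uplus : Subalgebra k (UniversalEnvelopingAlgebra k L) :=
      Algebra.adjoin k {UniversalEnvelopingAlgebra.ι k (E 1),
        UniversalEnvelopingAlgebra.ι k (E 2)}
    letI N : Submodule k M := Submodule.span k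
      ((fun a => ρ a x) '' (Uminus : Set (UniversalEnvelopingAlgebra k L)) ∪
       (fun a => ρ a y) '' (Uplus : Set (UniversalEnvelopingAlgebra k L)))
    (∀ u : L, ∀ m ∈ N, ⁅u, m⁆ ∈ N) ∧
    (∀ μ : k, FiniteDimensional k
      ↥(N ⊓ Module.End.eigenspace (LieModule.toEnd k L M (E 0)) μ)) :=
  virasoro_N_is_submodule_with_finite_weights_general E C hE hspan κ hc x y τ hx hy h1x hm1y hxy h2x
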